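/- Let (K, val) be a 2-henselian valued field whose residue field F is a euclidean field, admitting an angular component map an : Kˣ → Fˣ. Then K is pythagorean: every sum of two squares in K is a square in K. -/

import Mathlib

/-- A (multiplicatively written) valuation on a field `K` with value group `G`:
`v` is multiplicative and satisfies the ultrametric inequality on nonzero elements,
and is surjective onto `G`.  The value at `0` is irrelevant (the paper's `∞`). -/
structure MulValuation (K : Type*) [Field K] (G : Type*) [CommGroup G] [LinearOrder G] [IsOrderedMonoid G] where
  v : K → G
  map_mul : ∀ ⦃x y : K⦄, x ≠ 0 → y ≠ 0 → v (x * y) = v x * v y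
  min_le_map_add : ∀ ⦃x y : K⦄, x ≠ 0 → y ≠ 0 → x + y ≠ 0 → min (v x) (v y) ≤ v (x + y)
  surj : ∀ g : G, ∃ x : K, x ≠ 0 ∧ v x = g

namespace MulValuation

variable {K : Type*} [Field K] {G : Type*} [CommGroup G] [LinearOrder G] [IsOrderedMonoid G]

/-- The valuation ring `B = {x : val x ≥ e} ∪ {0}`, as a set. -/
def ringSet (V : MulValuation K G) : Set K := {x : K | x = 0 ∨ 1 ≤ V.v x}

/-- `val(Aˣ)`: the set of values of units of a subring `A` of `K`. -/
def unitVals (V : MulValuation K G) (A : Subring K) : Set G :=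
  {g : G | ∃ x : K, x ≠ 0 ∧ x ∈ A ∧ x⁻¹ ∈ A ∧ V.v x = g}

end MulValuation

/-- `π : K → F` is a residue homomorphism for `V`: it is a surjective ring
homomorphism on the valuation ring, whose nonvanishing locus on the valuation ring
is exactly the set of units of the valuation ring. -/
def MulValuation.IsResidue {K : Type*} [Field K] {G : Type*} [CommGroup G] [LinearOrder G] [IsOrderedMonoid G]
    {F : Type*} [Field F] (V : MulValuation K G) (π : K → F) : Prop :=
  π 0 = 0 ∧ π 1 = 1 ∧
  (∀ x y : K, x ∈ V.ringSet → y ∈ V.ringSet → π (x + y) = π x + π y) ∧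
  (∀ x y : K, x ∈ V.ringSet → y ∈ V.ringSet → π (x * y) = π x * π y) ∧
  (∀ x : K, x ≠ 0 → x ∈ V.ringSet → (π x ≠ 0 ↔ V.v x = 1)) ∧
  (∀ c : F, ∃ x ∈ V.ringSet, π x = c)

/-!
It suffices that `1 + t²` is a square for every `t`, and replacing `t` by `t⁻¹` we may assume
that `t` lies in the valuation ring. The residue `1 + π(t)²` is nonzero because `F` is formally
real, hence a nonzero square `d²` because `F` is euclidean. Dividing `1 + t²` by the square of a
lift of `d` gives a strict unit, which is a square by 2-henselianity.
-/

theorem exists_add_sq_eq_sq_of_forall_one_add_sq {K : Type*} [Field K]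
    (h : ∀ t : K, ∃ c : K, 1 + t ^ 2 = c ^ 2) (a b : K) : ∃ c : K, a ^ 2 + b ^ 2 = c ^ 2 := by
  rcases eq_or_ne b 0 with rfl | hb
  · exact ⟨a, by ring⟩
  obtain ⟨c, hc⟩ := h (a / b)
  refine ⟨b * c, ?_⟩
  rw [mul_pow, ← hc]
  field_simp
  ring

theorem exists_one_add_sq_eq_sq_of_euclidean {F : Type*} [Field F]
    (heuclid : ∀ c : F, (∃ d : F, c = d ^ 2) ∨ ∃ d : F, c = -(d ^ 2))
    (hreal : ∀ (n : ℕ) (f : Fin n → F), (∑ i, (f i) ^ 2) = 0 → ∀ i, f i = 0) (c : F) :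
    ∃ d : F, d ≠ 0 ∧ 1 + c ^ 2 = d ^ 2 := by
  rcases heuclid (1 + c ^ 2) with ⟨d, hd⟩ | ⟨d, hd⟩
  · refine ⟨d, ?_, hd⟩
    rintro rfl
    have hsum : ∑ i, (![1, c] i) ^ 2 = 0 := by
      simp only [Fin.sum_univ_two, Matrix.cons_val_zero, Matrix.cons_val_one]
      linear_combination hd
    exact one_ne_zero (hreal 2 ![1, c] hsum 0)
  · have hsum : ∑ i, (![1, c, d] i) ^ 2 = 0 := by
      simp only [Fin.sum_univ_three, Matrix.cons_val_zero, Matrix.cons_val_one,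
        Matrix.cons_val_two, Matrix.tail_cons, Matrix.head_cons]
      linear_combination hd
    exact absurd (hreal 3 ![1, c, d] hsum 0) one_ne_zero

namespace MulValuation

variable {K : Type*} [Field K] {G : Type*} [CommGroup G] [LinearOrder G] [IsOrderedMonoid G]
  (V : MulValuation K G)

theorem map_one : V.v 1 = 1 := by
  have h := V.map_mul (one_ne_zero' K) one_ne_zero
  rw [one_mul] at h
  exact right_eq_mul.mp h

theorem map_inv {x : K} (hx : x ≠ 0) : V.v x⁻¹ = (V.v x)⁻¹ := by
  have h := V.map_mul hx (inv_ne_zero hx)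
  rw [mul_inv_cancel₀ hx, map_one] at h
  exact eq_inv_of_mul_eq_one_right h.symm

theorem one_mem_ringSet : (1 : K) ∈ V.ringSet := Or.inr V.map_one.ge

theorem add_mem_ringSet {x y : K} (hx : x ∈ V.ringSet) (hy : y ∈ V.ringSet) :
    x + y ∈ V.ringSet := by
  by_cases hx0 : x = 0
  · rwa [hx0, zero_add]
  by_cases hy0 : y = 0
  · rwa [hy0, add_zero]
  by_cases hxy : x + y = 0
  · exact Or.inl hxy
  exact Or.inr ((le_min (hx.resolve_left hx0) (hy.resolve_left hy0)).trans
    (V.min_le_map_add hx0 hy0 hxy))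

theorem mul_mem_ringSet {x y : K} (hx : x ∈ V.ringSet) (hy : y ∈ V.ringSet) :
    x * y ∈ V.ringSet := by
  by_cases hxy : x * y = 0
  · exact Or.inl hxy
  have hx0 : x ≠ 0 := left_ne_zero_of_mul hxy
  have hy0 : y ≠ 0 := right_ne_zero_of_mul hxy
  exact Or.inr (V.map_mul hx0 hy0 ▸ one_le_mul (hx.resolve_left hx0) (hy.resolve_left hy0))

theorem inv_mem_ringSet_of_notMem {x : K} (hx : x ∉ V.ringSet) : x⁻¹ ∈ V.ringSet := by
  have hx0 : x ≠ 0 := fun h ↦ hx (Or.inl h)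
  have hlt : V.v x < 1 := not_le.mp fun h ↦ hx (Or.inr h)
  exact Or.inr ((V.map_inv hx0).symm ▸ one_le_inv'.mpr hlt.le)

namespace IsResidue

variable {V} {F : Type*} [Field F] {π : K → F} (hπ : V.IsResidue π)
include hπ

theorem map_zero : π 0 = 0 := hπ.1

theorem map_one : π 1 = 1 := hπ.2.1

theorem map_add {x y : K} (hx : x ∈ V.ringSet) (hy : y ∈ V.ringSet) :
    π (x + y) = π x + π y :=
  hπ.2.2.1 x y hx hy

theorem map_mul {x y : K} (hx : x ∈ V.ringSet) (hy : y ∈ V.ringSet) :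
    π (x * y) = π x * π y :=
  hπ.2.2.2.1 x y hx hy

theorem surjective (c : F) : ∃ x ∈ V.ringSet, π x = c := hπ.2.2.2.2.2 c

theorem ne_zero_of_map_ne_zero {x : K} (h : π x ≠ 0) : x ≠ 0 := by
  rintro rfl
  exact h hπ.map_zero

theorem map_eq_one_of_map_ne_zero {x : K} (hx : x ∈ V.ringSet) (h : π x ≠ 0) : V.v x = 1 :=
  (hπ.2.2.2.2.1 x (hπ.ne_zero_of_map_ne_zero h) hx).mp h

theorem inv_mem_ringSet {x : K} (hx : x ∈ V.ringSet) (h : π x ≠ 0) : x⁻¹ ∈ V.ringSet :=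
  Or.inr (by rw [V.map_inv (hπ.ne_zero_of_map_ne_zero h), hπ.map_eq_one_of_map_ne_zero hx h,
    inv_one])

theorem map_inv {x : K} (hx : x ∈ V.ringSet) (h : π x ≠ 0) : π x⁻¹ = (π x)⁻¹ := by
  have hmul := hπ.map_mul hx (hπ.inv_mem_ringSet hx h)
  rw [mul_inv_cancel₀ (hπ.ne_zero_of_map_ne_zero h), hπ.map_one] at hmul
  exact eq_inv_of_mul_eq_one_right hmul.symm

theorem exists_sq_of_map_eq_sq
    (hsqrt : ∀ x : K, x ≠ 0 → V.v x = 1 → π x = 1 → ∃ y : K, x = y ^ 2)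
    {x : K} (hx : x ∈ V.ringSet) {d : F} (hd : d ≠ 0) (hxd : π x = d ^ 2) :
    ∃ y : K, x = y ^ 2 := by
  obtain ⟨w, hw, rfl⟩ := hπ.surjective d
  have hw' : w⁻¹ ∈ V.ringSet := hπ.inv_mem_ringSet hw hd
  have hu : x * w⁻¹ * w⁻¹ ∈ V.ringSet := V.mul_mem_ringSet (V.mul_mem_ringSet hx hw') hw'
  have hπu : π (x * w⁻¹ * w⁻¹) = 1 := by
    rw [hπ.map_mul (V.mul_mem_ringSet hx hw') hw', hπ.map_mul hx hw', hπ.map_inv hw hd, hxd]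
    field_simp
  have hπu0 : π (x * w⁻¹ * w⁻¹) ≠ 0 := hπu ▸ one_ne_zero
  obtain ⟨y, hy⟩ := hsqrt _ (hπ.ne_zero_of_map_ne_zero hπu0)
    (hπ.map_eq_one_of_map_ne_zero hu hπu0) hπu
  refine ⟨y * w, ?_⟩
  rw [mul_pow, ← hy]
  field_simp [hπ.ne_zero_of_map_ne_zero hd]

theorem exists_one_add_sq_eq_sq
    (hsqrt : ∀ x : K, x ≠ 0 → V.v x = 1 → π x = 1 → ∃ y : K, x = y ^ 2)
    (hF : ∀ c : F, ∃ d : F, d ≠ 0 ∧ 1 + c ^ 2 = d ^ 2) (t : K) :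
    ∃ c : K, 1 + t ^ 2 = c ^ 2 := by
  have of_mem : ∀ s ∈ V.ringSet, ∃ c : K, 1 + s ^ 2 = c ^ 2 := by
    intro s hs
    obtain ⟨d, hd, hsd⟩ := hF (π s)
    have hs2 : s ^ 2 ∈ V.ringSet := sq s ▸ V.mul_mem_ringSet hs hs
    refine hπ.exists_sq_of_map_eq_sq hsqrt (V.add_mem_ringSet V.one_mem_ringSet hs2) hd ?_
    rw [hπ.map_add V.one_mem_ringSet hs2, hπ.map_one, sq s, hπ.map_mul hs hs, ← sq, hsd]
  by_cases ht : t ∈ V.ringSet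
  · exact of_mem t ht
  obtain ⟨c, hc⟩ := of_mem t⁻¹ (V.inv_mem_ringSet_of_notMem ht)
  have ht0 : t ≠ 0 := fun h ↦ ht (Or.inl h)
  refine ⟨t * c, ?_⟩
  rw [mul_pow, ← hc]
  field_simp
  ring

end IsResidue

end MulValuation

theorem stmt19_general {K : Type*} [Field K] {G : Type*} [CommGroup G] [LinearOrder G] [IsOrderedMonoid G]
    {F : Type*} [Field F] (V : MulValuation K G) (π : K → F)
    (hres : V.IsResidue π)
    -- 2-henselian: every strict unit admits a square root
    (hsqrt : ∀ x : K, x ≠ 0 → V.v x = 1 → π x = 1 → ∃ y : K, x = y ^ 2)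
    -- the residue field `F` is euclidean: formally real and `F = F² ∪ (−F²)`
    (heuclid : ∀ c : F, (∃ d : F, c = d ^ 2) ∨ ∃ d : F, c = -(d ^ 2))
    (hreal : ∀ (n : ℕ) (f : Fin n → F), (∑ i, (f i) ^ 2) = 0 → ∀ i, f i = 0) :
    -- `K` is pythagorean
    ∀ a b : K, ∃ c : K, a ^ 2 + b ^ 2 = c ^ 2 :=
  exists_add_sq_eq_sq_of_forall_one_add_sq
    (hres.exists_one_add_sq_eq_sq hsqrt (exists_one_add_sq_eq_sq_of_euclidean heuclid hreal))

theorem stmt19 {K : Type*} [Field K] {G : Type*} [CommGroup G] [LinearOrder G] [IsOrderedMonoid G]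
    {F : Type*} [Field F] (V : MulValuation K G) (π : K → F)
    (hres : V.IsResidue π)
    -- 2-henselian: every strict unit admits a square root
    (hsqrt : ∀ x : K, x ≠ 0 → V.v x = 1 → π x = 1 → ∃ y : K, x = y ^ 2)
    -- the residue field `F` is euclidean: formally real and `F = F² ∪ (−F²)`
    (heuclid : ∀ c : F, (∃ d : F, c = d ^ 2) ∨ ∃ d : F, c = -(d ^ 2))
    (hreal : ∀ (n : ℕ) (f : Fin n → F), (∑ i, (f i) ^ 2) = 0 → ∀ i, f i = 0)
    -- an angular component map: a group homomorphism `Kˣ → Fˣ` restricting to `π` on `Bˣ`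
    (an : K → F)
    (han0 : ∀ x : K, x ≠ 0 → an x ≠ 0)
    (hanmul : ∀ x y : K, x ≠ 0 → y ≠ 0 → an (x * y) = an x * an y)
    (hanres : ∀ x : K, x ≠ 0 → V.v x = 1 → an x = π x) :
    -- `K` is pythagorean
    ∀ a b : K, ∃ c : K, a ^ 2 + b ^ 2 = c ^ 2 :=
  stmt19_general V π hres hsqrt heuclid hreal
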